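/- Let X be a Banach space, S_n ⊂ S_X with S_X = ⋃_{n=1}^∞ S_n, and H_n ⊂ B_{X*} an increasing sequence of sets such that b_n = inf{ sup{h(x) : h ∈ H_n} : x ∈ S_n } are strictly positive and converge to 1. Put H = ⋃_{n=1}^∞ (H_n ∪ −H_n), n(h) = min{n : h ∈ H_n ∪ −H_n} for h ∈ H, c_n = inf{b_m : m ≥ n}, a_n = (1 + 2^{−n})/c_n, the seminorms ‖x‖_n = sup{a_{n(h)}|h(x)| : h ∈ H_n}, and |||x||| = sup{a_{n(h)}|h(x)| : h ∈ H}. Then: (i) ‖x‖ < |||x||| ≤ a_1‖x‖ for every x ∈ X \ {0}; (ii) for every x ∈ X there exists an integer n_x with |||x||| = ‖x‖_{n_x}; and (iii) if each H_n is a relative boundary, then F = ⋃_{n=1}^∞ a_n((H_n \ H_{n-1}) ∪ −(H_n \ H_{n-1})) (with H_0 = ∅) is a boundary with respect to |||·|||. -/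

import Mathlib

open NormedSpace Filter Set Topology Pointwise

noncomputable section

/-- `g` is a weak-* limit point of `F`: every weak-* neighbourhood of `g`
contains infinitely many points of `F`. -/
def IsWeakStarLimitPoint {X : Type*} [NormedAddCommGroup X] [NormedSpace ℝ X]
    (F : Set (StrongDual ℝ X)) (g : StrongDual ℝ X) : Prop :=
  ∀ U : Set (WeakDual ℝ X), IsOpen U → StrongDual.toWeakDual g ∈ U →
    {f : StrongDual ℝ X | f ∈ F ∧ StrongDual.toWeakDual f ∈ U}.Infinite

/-- Property (*) of a set of functionals. -/
def PropertyStar {X : Type*} [NormedAddCommGroup X] [NormedSpace ℝ X]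
    (F : Set (StrongDual ℝ X)) : Prop :=
  ∀ g : StrongDual ℝ X, IsWeakStarLimitPoint F g →
    ∀ x : X, sSup ((fun f : StrongDual ℝ X => f x) '' F) = 1 → g x < 1

/-- `F` is a relative boundary. -/
def IsRelativeBoundary {X : Type*} [NormedAddCommGroup X] [NormedSpace ℝ X]
    (F : Set (StrongDual ℝ X)) : Prop :=
  ∀ x : X, sSup ((fun f : StrongDual ℝ X => f x) '' F) = 1 → ∃ f ∈ F, f x = 1

/-- `B` is a boundary for the norm `ν`: every element of `B` lies in the
`ν`-dual unit ball, and every `ν`-unit vector attains the value 1 at some member of `B`. -/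
def IsBoundaryFor {X : Type*} [NormedAddCommGroup X] [NormedSpace ℝ X]
    (ν : X → ℝ) (B : Set (StrongDual ℝ X)) : Prop :=
  (∀ f ∈ B, ∀ x : X, f x ≤ ν x) ∧ ∀ x : X, ν x = 1 → ∃ f ∈ B, f x = 1

/-- `ν` is an equivalent norm on `X`. -/
def IsEquivNorm {X : Type*} [NormedAddCommGroup X] [NormedSpace ℝ X]
    (ν : Seminorm ℝ X) : Prop :=
  ∃ c C : ℝ, 0 < c ∧ ∀ x : X, c * ‖x‖ ≤ ν x ∧ ν x ≤ C * ‖x‖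

/-- A norm (given as a function) is polyhedral if the unit ball of every
finite-dimensional subspace is a polytope, i.e. the convex hull of finitely many points. -/
def IsPolyhedralNorm {X : Type*} [NormedAddCommGroup X] [NormedSpace ℝ X]
    (ν : X → ℝ) : Prop :=
  ∀ Y : Subspace ℝ X, FiniteDimensional ℝ Y →
    ∃ T : Set X, T.Finite ∧ {x : X | x ∈ Y ∧ ν x ≤ 1} = convexHull ℝ T

/-- `E ⊆ X*` is weak-* locally relatively norm-compact. -/
def IsWeakStarLRC {X : Type*} [NormedAddCommGroup X] [NormedSpace ℝ X]
    (E : Set (StrongDual ℝ X)) : Prop :=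
  ∀ y ∈ E, ∃ U : Set (WeakDual ℝ X), IsOpen U ∧ StrongDual.toWeakDual y ∈ U ∧
    IsCompact (closure (E ∩ (fun f : StrongDual ℝ X => StrongDual.toWeakDual f) ⁻¹' U))

/-- `E` is a countable union of weak-* LRC sets. -/
def IsSigmaWeakStarLRC {X : Type*} [NormedAddCommGroup X] [NormedSpace ℝ X]
    (E : Set (StrongDual ℝ X)) : Prop :=
  ∃ E' : ℕ → Set (StrongDual ℝ X), E = ⋃ n, E' n ∧ ∀ n, IsWeakStarLRC (E' n)

/-- `E` is a countable union of weak-*-compact sets. -/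
def IsWeakStarSigmaCompact {X : Type*} [NormedAddCommGroup X] [NormedSpace ℝ X]
    (E : Set (StrongDual ℝ X)) : Prop :=
  ∃ C : ℕ → Set (WeakDual ℝ X), (∀ n, IsCompact (C n)) ∧
    (fun f : StrongDual ℝ X => StrongDual.toWeakDual f) '' E = ⋃ n, C n


/-!
Each `h ∈ H m` carries the weight `a (nh h) ≥ a m`, and `a m * b m > 1`; so a unit vector of
`S m` is pushed above norm `1` by some `h ∈ H m`, giving `‖x‖ < |||x|||`. Because `a n → 1`,
the functionals entering after a late stage contribute at most about `‖x‖ < |||x|||`, so the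
supremum defining `|||x|||` is a maximum over finitely many stages `k`, of
`a k * sup {|h x| : h ∈ H k}`; this gives (ii). If `|||x||| = 1` and `k` is such a stage, the
relative boundary property of `H k` at `± a k • x` produces `h ∈ H k` with `a k * h (± x) = 1`,
and rescaling `h` instead by `a j`, for the stage `j ≤ k` at which `h` enters, yields a
functional of `F` that still attains `1` at `± x`, since `a j ≥ a k` and `|||x||| = 1`.
-/

theorem Real.sInf_le_of_pos {s : Set ℝ} (hs : 0 < sInf s) {y : ℝ} (hy : y ∈ s) : sInf s ≤ y :=
  csInf_le (not_not.1 fun h => hs.ne' (Real.sInf_of_not_bddBelow h)) hy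

theorem Real.sSup_image_le_sSup_image {ι : Type*} {T : Set ι} {f g : ι → ℝ}
    (hfg : ∀ i ∈ T, f i ≤ g i) (hg : BddAbove (g '' T)) : sSup (f '' T) ≤ sSup (g '' T) := by
  rcases T.eq_empty_or_nonempty with rfl | hT
  · simp
  exact csSup_le (hT.image f)
    (forall_mem_image.2 fun i hi => (hfg i hi).trans (le_csSup hg ⟨i, hi, rfl⟩))

theorem Real.sSup_image_abs_eq_or {ι : Type*} {T : Set ι} (f : ι → ℝ)
    (hf : BddAbove ((fun i => |f i|) '' T)) :
    sSup ((fun i => |f i|) '' T) = sSup (f '' T) ∨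
      sSup ((fun i => |f i|) '' T) = sSup ((fun i => -f i) '' T) := by
  rcases T.eq_empty_or_nonempty with rfl | hT
  · simp
  obtain ⟨M, hM⟩ := hf
  have hbdd : ∀ g : ι → ℝ, (∀ i, g i ≤ |f i|) → BddAbove (g '' T) := fun g hg =>
    ⟨M, forall_mem_image.2 fun i hi => (hg i).trans (hM ⟨i, hi, rfl⟩)⟩
  have hmax : sSup ((fun i => |f i|) '' T) = max (sSup (f '' T)) (sSup ((fun i => -f i) '' T)) := by
    refine le_antisymm (csSup_le (hT.image _) (forall_mem_image.2 fun i hi => ?_)) (max_le ?_ ?_)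
    · exact max_le_max (le_csSup (hbdd f fun i => le_abs_self (f i)) ⟨i, hi, rfl⟩)
        (le_csSup (hbdd _ fun i => neg_le_abs (f i)) ⟨i, hi, rfl⟩)
    · exact Real.sSup_image_le_sSup_image (fun i _ => le_abs_self (f i)) ⟨M, hM⟩
    · exact Real.sSup_image_le_sSup_image (fun i _ => neg_le_abs (f i)) ⟨M, hM⟩
  rcases max_choice (sSup (f '' T)) (sSup ((fun i => -f i) '' T)) with h | h
  exacts [Or.inl (hmax.trans h), Or.inr (hmax.trans h)]

theorem sInf_image_Ici_le {b : ℕ → ℝ} (hb : BddBelow (range b)) {n m : ℕ} (hnm : n ≤ m) :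
    sInf (b '' Ici n) ≤ b m :=
  csInf_le (hb.mono (image_subset_range _ _)) ⟨m, hnm, rfl⟩

theorem monotone_sInf_image_Ici {b : ℕ → ℝ} (hb : BddBelow (range b)) :
    Monotone fun n => sInf (b '' Ici n) := fun _ _ hnm =>
  csInf_le_csInf (hb.mono (image_subset_range _ _)) (nonempty_Ici.image b)
    (image_mono (Ici_subset_Ici.2 hnm))

theorem tendsto_sInf_image_Ici {b : ℕ → ℝ} {L : ℝ} (hb : Tendsto b atTop (𝓝 L)) :
    Tendsto (fun n => sInf (b '' Ici n)) atTop (𝓝 L) := by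
  refine tendsto_order.2 ⟨fun l hl => ?_, fun u hu => ?_⟩
  · obtain ⟨l', hll', hl'L⟩ := exists_between hl
    obtain ⟨N, hN⟩ := eventually_atTop.1 (hb.eventually (lt_mem_nhds hl'L))
    filter_upwards [eventually_ge_atTop N] with n hn
    exact hll'.trans_le (le_csInf (nonempty_Ici.image b)
      (forall_mem_image.2 fun m hm => (hN m (hn.trans hm)).le))
  · filter_upwards [hb.eventually (gt_mem_nhds hu)] with n hn
    exact (sInf_image_Ici_le hb.bddBelow_range le_rfl).trans_lt hn

/-- The tail `b n, b (n+1), …` together with its limit is compact, so its infimum is attained. -/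
theorem sInf_image_Ici_pos {b : ℕ → ℝ} {L : ℝ} (hb : Tendsto b atTop (𝓝 L)) (hL : 0 < L)
    {n : ℕ} (hpos : ∀ m, n ≤ m → 0 < b m) : 0 < sInf (b '' Ici n) := by
  set K := insert L (range fun k => b (k + n))
  have hK : IsCompact K := (hb.comp (tendsto_add_atTop_nat n)).isCompact_insert_range
  have hsub : b '' Ici n ⊆ K := by
    rintro _ ⟨m, hm, rfl⟩
    exact mem_insert_of_mem _ ⟨m - n, by simp [Nat.sub_add_cancel (mem_Ici.1 hm)]⟩
  have hKpos : ∀ y ∈ K, 0 < y := by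
    rintro _ (rfl | ⟨k, rfl⟩)
    exacts [hL, hpos _ (Nat.le_add_left n k)]
  exact (hKpos _ (hK.sInf_mem (insert_nonempty _ _))).trans_le
    (csInf_le_csInf hK.bddBelow (nonempty_Ici.image b) hsub)

theorem sInf_setOf_mem_spec {α : Type*} {s : ℕ → Set α} (h0 : s 0 = ∅) {y : α} {k : ℕ}
    (hy : y ∈ s k) :
    1 ≤ sInf {n | y ∈ s n} ∧ sInf {n | y ∈ s n} ≤ k ∧
      y ∈ s (sInf {n | y ∈ s n}) \ s (sInf {n | y ∈ s n} - 1) := by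
  have hmem : y ∈ s (sInf {n | y ∈ s n}) := Nat.sInf_mem (s := {n | y ∈ s n}) ⟨k, hy⟩
  have hpos : 1 ≤ sInf {n | y ∈ s n} :=
    Nat.one_le_iff_ne_zero.2 fun h => by simp [h, h0] at hmem
  exact ⟨hpos, Nat.sInf_le hy, hmem, Nat.notMem_of_lt_sInf (s := {n | y ∈ s n}) (by omega)⟩

section Weights

variable {a b c : ℕ → ℝ}

theorem tendsto_two_zpow_neg_natCast : Tendsto (fun n : ℕ => (2 : ℝ) ^ (-(n : ℤ))) atTop (𝓝 0) := by
  simp only [zpow_neg, zpow_natCast]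
  exact tendsto_inv_atTop_zero.comp (tendsto_pow_atTop_atTop_of_one_lt one_lt_two)

theorem pos_of_eq_sInf_image_Ici (hbpos : ∀ n, 1 ≤ n → 0 < b n) (hblim : Tendsto b atTop (𝓝 1))
    (hc : ∀ n, 1 ≤ n → c n = sInf (b '' Ici n)) {n : ℕ} (hn : 1 ≤ n) : 0 < c n :=
  hc n hn ▸ sInf_image_Ici_pos hblim one_pos fun m hm => hbpos m (hn.trans hm)

theorem weight_pos (hbpos : ∀ n, 1 ≤ n → 0 < b n) (hblim : Tendsto b atTop (𝓝 1))
    (hc : ∀ n, 1 ≤ n → c n = sInf (b '' Ici n))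
    (ha : ∀ n, 1 ≤ n → a n = (1 + (2 : ℝ) ^ (-(n : ℤ))) / c n) {n : ℕ} (hn : 1 ≤ n) :
    0 < a n :=
  ha n hn ▸ div_pos (by positivity) (pos_of_eq_sInf_image_Ici hbpos hblim hc hn)

theorem one_lt_weight_mul (hbpos : ∀ n, 1 ≤ n → 0 < b n) (hblim : Tendsto b atTop (𝓝 1))
    (hc : ∀ n, 1 ≤ n → c n = sInf (b '' Ici n))
    (ha : ∀ n, 1 ≤ n → a n = (1 + (2 : ℝ) ^ (-(n : ℤ))) / c n) {n : ℕ} (hn : 1 ≤ n) :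
    1 < a n * b n := by
  have hcn := pos_of_eq_sInf_image_Ici hbpos hblim hc hn
  have hcb : c n ≤ b n := hc n hn ▸ sInf_image_Ici_le hblim.bddBelow_range le_rfl
  calc 1 < 1 + (2 : ℝ) ^ (-(n : ℤ)) := lt_add_of_pos_right 1 (by positivity)
    _ = a n * c n := by rw [ha n hn, div_mul_cancel₀ _ hcn.ne']
    _ ≤ a n * b n := mul_le_mul_of_nonneg_left hcb (weight_pos hbpos hblim hc ha hn).le

theorem antitoneOn_weight (hbpos : ∀ n, 1 ≤ n → 0 < b n) (hblim : Tendsto b atTop (𝓝 1))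
    (hc : ∀ n, 1 ≤ n → c n = sInf (b '' Ici n))
    (ha : ∀ n, 1 ≤ n → a n = (1 + (2 : ℝ) ^ (-(n : ℤ))) / c n) : AntitoneOn a (Ici 1) := by
  intro n hn m hm hnm
  have h2 : (2 : ℝ) ^ (-(m : ℤ)) ≤ 2 ^ (-(n : ℤ)) := zpow_le_zpow_right₀ one_le_two (by omega)
  have hcnm : c n ≤ c m := by
    rw [hc n hn, hc m hm]
    exact monotone_sInf_image_Ici hblim.bddBelow_range hnm
  rw [ha n hn, ha m hm]
  exact div_le_div₀ (by positivity) (by linarith) (pos_of_eq_sInf_image_Ici hbpos hblim hc hn) hcnm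

theorem tendsto_weight (hblim : Tendsto b atTop (𝓝 1)) (hc : ∀ n, 1 ≤ n → c n = sInf (b '' Ici n))
    (ha : ∀ n, 1 ≤ n → a n = (1 + (2 : ℝ) ^ (-(n : ℤ))) / c n) : Tendsto a atTop (𝓝 1) := by
  have hclim : Tendsto c atTop (𝓝 1) :=
    (tendsto_sInf_image_Ici hblim).congr' (eventually_atTop.2 ⟨1, fun n hn => (hc n hn).symm⟩)
  have hlim :=
    ((tendsto_const_nhds (x := (1 : ℝ))).add tendsto_two_zpow_neg_natCast).div hclim one_ne_zero
  rw [add_zero, div_one] at hlim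
  exact hlim.congr' (eventually_atTop.2 ⟨1, fun n hn => (ha n hn).symm⟩)

end Weights

section WeightedSup

variable {X : Type*} [NormedAddCommGroup X] [NormedSpace ℝ X]

/-- The seminorms `‖x‖_n` and `|||x|||` of the statement are `weightedSup (a ∘ nh)` over
`H n` and over `⋃ n, (H n ∪ -H n)`. -/
def weightedSup (w : StrongDual ℝ X → ℝ) (T : Set (StrongDual ℝ X)) (x : X) : ℝ :=
  sSup ((fun h => w h * |h x|) '' T)

theorem weightedSup_zero (w : StrongDual ℝ X → ℝ) (T : Set (StrongDual ℝ X)) :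
    weightedSup w T 0 = 0 := by
  rcases T.eq_empty_or_nonempty with rfl | hT
  · simp [weightedSup]
  simp [weightedSup, hT.image_const]

theorem weightedSup_neg (w : StrongDual ℝ X → ℝ) (T : Set (StrongDual ℝ X)) (x : X) :
    weightedSup w T (-x) = weightedSup w T x := by
  simp [weightedSup]

theorem weightedSup_le {w : StrongDual ℝ X → ℝ} {T : Set (StrongDual ℝ X)} {x : X} {r : ℝ}
    (h : ∀ f ∈ T, w f * |f x| ≤ r) (hr : 0 ≤ r) : weightedSup w T x ≤ r :=
  Real.sSup_le (forall_mem_image.2 h) hr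

theorem le_weightedSup {w : StrongDual ℝ X → ℝ} {T : Set (StrongDual ℝ X)} {x : X}
    (hbdd : BddAbove ((fun h => w h * |h x|) '' T)) {f : StrongDual ℝ X} (hf : f ∈ T) :
    w f * |f x| ≤ weightedSup w T x :=
  le_csSup hbdd ⟨f, hf, rfl⟩

theorem norm_le_one_of_mem_union_neg {T : Set (StrongDual ℝ X)} (hT : T ⊆ {f | ‖f‖ ≤ 1})
    {f : StrongDual ℝ X} (hf : f ∈ T ∪ -T) : ‖f‖ ≤ 1 := by
  rcases hf with hf | hf
  exacts [hT hf, norm_neg f ▸ hT hf]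

theorem mul_abs_apply_le {f : StrongDual ℝ X} (hf : ‖f‖ ≤ 1) {r C : ℝ} (hr : 0 ≤ r)
    (hrC : r ≤ C) (x : X) : r * |f x| ≤ C * ‖x‖ := by
  have : |f x| ≤ ‖x‖ := by simpa using f.le_of_opNorm_le hf x
  exact mul_le_mul hrC this (abs_nonneg _) (hr.trans hrC)

theorem bddAbove_weighted {w : StrongDual ℝ X → ℝ} {T : Set (StrongDual ℝ X)} {C : ℝ}
    (hT : ∀ f ∈ T, ‖f‖ ≤ 1 ∧ 0 ≤ w f ∧ w f ≤ C) (x : X) :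
    BddAbove ((fun h => w h * |h x|) '' T) :=
  ⟨C * ‖x‖, forall_mem_image.2 fun f hf =>
    mul_abs_apply_le (hT f hf).1 (hT f hf).2.1 (hT f hf).2.2 x⟩

theorem weightedSup_le_mul_norm {w : StrongDual ℝ X → ℝ} {T : Set (StrongDual ℝ X)} {C : ℝ}
    (hT : ∀ f ∈ T, ‖f‖ ≤ 1 ∧ 0 ≤ w f ∧ w f ≤ C) (hC : 0 ≤ C) (x : X) :
    weightedSup w T x ≤ C * ‖x‖ :=
  weightedSup_le (fun f hf => mul_abs_apply_le (hT f hf).1 (hT f hf).2.1 (hT f hf).2.2 x)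
    (mul_nonneg hC (norm_nonneg x))

theorem mul_abs_le_weightedSup_const {T : Set (StrongDual ℝ X)} (hT : T ⊆ {f | ‖f‖ ≤ 1})
    {r : ℝ} (hr : 0 ≤ r) {f : StrongDual ℝ X} (hf : f ∈ T ∪ -T) (x : X) :
    r * |f x| ≤ weightedSup (fun _ => r) T x := by
  have hbdd := bddAbove_weighted (w := fun _ => r) (fun g hg => ⟨hT hg, hr, le_rfl⟩) x
  rcases hf with hf | hf
  · exact le_weightedSup hbdd hf
  · simpa using le_weightedSup hbdd hf

end WeightedSup

section Renorming

variable {X : Type*} [NormedAddCommGroup X] [NormedSpace ℝ X] {H : ℕ → Set (StrongDual ℝ X)}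
  {a : ℕ → ℝ} {w : StrongDual ℝ X → ℝ}

theorem sInf_index_spec {nh : StrongDual ℝ X → ℕ} (hH0 : H 0 = ∅)
    (hnh : ∀ h ∈ ⋃ n, (H n ∪ -H n), nh h = sInf {n : ℕ | h ∈ H n ∪ -H n})
    {n : ℕ} {h : StrongDual ℝ X} (hh : h ∈ H n ∪ -H n) :
    1 ≤ nh h ∧ nh h ≤ n ∧ h ∈ H (nh h) ∪ -H (nh h) := by
  obtain ⟨h1, h2, h3, -⟩ := hnh h (mem_iUnion.2 ⟨n, hh⟩) ▸
    sInf_setOf_mem_spec (s := fun n => H n ∪ -H n) (by simp [hH0]) hh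
  exact ⟨h1, h2, h3⟩

theorem norm_le_one_and_weight_bounds (hball : ∀ n, H n ⊆ {f | ‖f‖ ≤ 1})
    (hapos : ∀ n, 1 ≤ n → 0 < a n) (hanti : AntitoneOn a (Ici 1))
    (hw' : ∀ h ∈ ⋃ n, (H n ∪ -H n), ∃ k, 1 ≤ k ∧ h ∈ H k ∪ -H k ∧ w h = a k) :
    ∀ h ∈ ⋃ n, (H n ∪ -H n), ‖h‖ ≤ 1 ∧ 0 ≤ w h ∧ w h ≤ a 1 := by
  intro h hh
  obtain ⟨k, hk, hhk, hwk⟩ := hw' h hh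
  rw [hwk]
  exact ⟨norm_le_one_of_mem_union_neg (hball k) hhk, (hapos k hk).le,
    hanti (mem_Ici.2 le_rfl) hk hk⟩

theorem norm_lt_weightedSup {S : ℕ → Set X} {b : ℕ → ℝ}
    (hcover : Metric.sphere (0 : X) 1 ⊆ ⋃ (n : ℕ) (_ : 1 ≤ n), S n)
    (hb : ∀ n, 1 ≤ n →
      b n = sInf ((fun x : X => sSup ((fun h : StrongDual ℝ X => h x) '' H n)) '' S n))
    (hbpos : ∀ n, 1 ≤ n → 0 < b n) (hab : ∀ n, 1 ≤ n → 1 < a n * b n)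
    (hw : ∀ n, ∀ h ∈ H n ∪ -H n, a n ≤ w h)
    (hbdd : ∀ x, BddAbove ((fun h => w h * |h x|) '' ⋃ n, (H n ∪ -H n)))
    {x : X} (hx : x ≠ 0) : ‖x‖ < weightedSup w (⋃ n, (H n ∪ -H n)) x := by
  set u := ‖x‖⁻¹ • x
  have hu : u ∈ Metric.sphere (0 : X) 1 := mem_sphere_zero_iff_norm.2 (norm_smul_inv_norm hx)
  obtain ⟨m, hm, hum⟩ := mem_iUnion₂.1 (hcover hu)
  have ham : 0 < a m := pos_of_mul_pos_left (one_pos.trans (hab m hm)) (hbpos m hm).le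
  have hbm : b m ≤ sSup ((fun h : StrongDual ℝ X => h u) '' H m) :=
    hb m hm ▸ Real.sInf_le_of_pos (hb m hm ▸ hbpos m hm) ⟨u, hum, rfl⟩
  have hlt : (a m)⁻¹ < sSup ((fun h : StrongDual ℝ X => h u) '' H m) :=
    ((inv_lt_iff_one_lt_mul₀' ham).2 (hab m hm)).trans_le hbm
  have hne : ((fun h : StrongDual ℝ X => h u) '' H m).Nonempty := by
    by_contra hem
    rw [not_nonempty_iff_eq_empty.1 hem, Real.sSup_empty] at hlt
    exact (inv_pos.2 ham).not_gt hlt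
  obtain ⟨_, ⟨h, hh, rfl⟩, hhu⟩ := exists_lt_of_lt_csSup hne hlt
  have hhx : h x = ‖x‖ * h u := by simp [u, norm_ne_zero_iff.2 hx]
  have hxpos : 0 < ‖x‖ := norm_pos_iff.2 hx
  calc ‖x‖ = a m * ‖x‖ * (a m)⁻¹ := by field_simp
    _ < a m * ‖x‖ * h u := mul_lt_mul_of_pos_left hhu (by positivity)
    _ = a m * h x := by rw [hhx]; ring
    _ ≤ a m * |h x| := mul_le_mul_of_nonneg_left (le_abs_self _) ham.le
    _ ≤ w h * |h x| := mul_le_mul_of_nonneg_right (hw m h (Or.inl hh)) (abs_nonneg _)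
    _ ≤ _ := le_weightedSup (hbdd x) (mem_iUnion.2 ⟨m, Or.inl hh⟩)

theorem exists_weightedSup_eq_weightedSup_const (hball : ∀ n, H n ⊆ {f | ‖f‖ ≤ 1})
    (hapos : ∀ n, 1 ≤ n → 0 < a n) (halim : Tendsto a atTop (𝓝 1))
    (hw : ∀ n, ∀ h ∈ H n ∪ -H n, a n ≤ w h)
    (hw' : ∀ h ∈ ⋃ n, (H n ∪ -H n), ∃ k, 1 ≤ k ∧ h ∈ H k ∪ -H k ∧ w h = a k)
    (hbdd : ∀ x, BddAbove ((fun h => w h * |h x|) '' ⋃ n, (H n ∪ -H n)))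
    {x : X} (hx : ‖x‖ < weightedSup w (⋃ n, (H n ∪ -H n)) x) :
    ∃ k, 1 ≤ k ∧
      weightedSup w (⋃ n, (H n ∪ -H n)) x = weightedSup (fun _ => a k) (H k) x := by
  set t := weightedSup w (⋃ n, (H n ∪ -H n)) x
  obtain ⟨r, hxr, hrt⟩ := exists_between hx
  obtain ⟨N, hN⟩ := eventually_atTop.1
    ((halim.mul_const ‖x‖).eventually (gt_mem_nhds (by rwa [one_mul])))
  have hI : (Finset.Icc 1 (max 1 N)).Nonempty := ⟨1, Finset.mem_Icc.2 ⟨le_rfl, le_max_left _ _⟩⟩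
  set M := (Finset.Icc 1 (max 1 N)).sup' hI fun k => weightedSup (fun _ => a k) (H k) x
  have hle : ∀ k, 1 ≤ k → weightedSup (fun _ => a k) (H k) x ≤ t := fun k _ =>
    weightedSup_le (fun h hh => (mul_le_mul_of_nonneg_right (hw k h (Or.inl hh))
      (abs_nonneg _)).trans (le_weightedSup (hbdd x) (mem_iUnion.2 ⟨k, Or.inl hh⟩)))
      ((norm_nonneg x).trans hx.le)
  have htM : t ≤ M := by
    refine (le_max_iff.1 (weightedSup_le (r := max M r) (fun h hh => ?_)
      (le_max_of_le_right ((norm_nonneg x).trans hxr.le)))).resolve_right hrt.not_ge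
    obtain ⟨k, hk, hhk, hwk⟩ := hw' h hh
    rw [hwk]
    rcases le_or_gt k (max 1 N) with hkN | hkN
    · exact le_max_of_le_left ((mul_abs_le_weightedSup_const (hball k) (hapos k hk).le hhk x).trans
        (Finset.le_sup' (fun k => weightedSup (fun _ => a k) (H k) x) (Finset.mem_Icc.2 ⟨hk, hkN⟩)))
    · exact le_max_of_le_right ((mul_abs_apply_le (norm_le_one_of_mem_union_neg (hball k) hhk)
        (hapos k hk).le le_rfl x).trans (hN k (le_of_max_le_right hkN.le)).le)
  obtain ⟨k, hk, hkM⟩ := Finset.exists_mem_eq_sup' hI fun k => weightedSup (fun _ => a k) (H k) x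
  exact ⟨k, (Finset.mem_Icc.1 hk).1, le_antisymm (htM.trans hkM.le) (hle k (Finset.mem_Icc.1 hk).1)⟩

theorem exists_weightedSup_eq_weightedSup (hball : ∀ n, H n ⊆ {f | ‖f‖ ≤ 1})
    (hapos : ∀ n, 1 ≤ n → 0 < a n) (halim : Tendsto a atTop (𝓝 1))
    (hw : ∀ n, ∀ h ∈ H n ∪ -H n, a n ≤ w h)
    (hw' : ∀ h ∈ ⋃ n, (H n ∪ -H n), ∃ k, 1 ≤ k ∧ h ∈ H k ∪ -H k ∧ w h = a k)
    (hbdd : ∀ x, BddAbove ((fun h => w h * |h x|) '' ⋃ n, (H n ∪ -H n)))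
    (hlow : ∀ x : X, x ≠ 0 → ‖x‖ < weightedSup w (⋃ n, (H n ∪ -H n)) x) (x : X) :
    ∃ n, 1 ≤ n ∧ weightedSup w (⋃ n, (H n ∪ -H n)) x = weightedSup w (H n) x := by
  rcases eq_or_ne x 0 with rfl | hx
  · exact ⟨1, le_rfl, by rw [weightedSup_zero, weightedSup_zero]⟩
  obtain ⟨k, hk, hxk⟩ :=
    exists_weightedSup_eq_weightedSup_const hball hapos halim hw hw' hbdd (hlow x hx)
  refine ⟨k, hk, le_antisymm ?_ ?_⟩
  · rw [hxk]
    exact Real.sSup_image_le_sSup_image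
      (fun h hh => mul_le_mul_of_nonneg_right (hw k h (Or.inl hh)) (abs_nonneg _))
      ((hbdd x).mono (image_mono (subset_iUnion_of_subset k subset_union_left)))
  · exact weightedSup_le (fun h hh => le_weightedSup (hbdd x) (mem_iUnion.2 ⟨k, Or.inl hh⟩))
      ((norm_nonneg x).trans (hlow x hx).le)

theorem neg_mem_iUnion_smul_union_neg {E : Type*} [AddCommGroup E] [Module ℝ E]
    {D : ℕ → Set E} {f : E} (hf : f ∈ ⋃ n, a n • (D n ∪ -D n)) :
    -f ∈ ⋃ n, a n • (D n ∪ -D n) := by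
  obtain ⟨n, hn⟩ := mem_iUnion.1 hf
  obtain ⟨g, hg, rfl⟩ := mem_smul_set.1 hn
  exact mem_iUnion.2 ⟨n, -g, by simpa [or_comm] using hg, smul_neg _ _⟩

theorem apply_le_weightedSup_of_mem (hH0 : H 0 = ∅) (hapos : ∀ n, 1 ≤ n → 0 < a n)
    (hw : ∀ n, ∀ h ∈ H n ∪ -H n, a n ≤ w h)
    (hbdd : ∀ x, BddAbove ((fun h => w h * |h x|) '' ⋃ n, (H n ∪ -H n)))
    {f : StrongDual ℝ X} (hf : f ∈ ⋃ n, a n • ((H n \ H (n - 1)) ∪ -(H n \ H (n - 1))))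
    (x : X) : f x ≤ weightedSup w (⋃ n, (H n ∪ -H n)) x := by
  obtain ⟨n, hn⟩ := mem_iUnion.1 hf
  obtain ⟨g, hg, rfl⟩ := mem_smul_set.1 hn
  have hgH : g ∈ H n ∪ -H n := hg.imp (fun h => h.1) (fun h => h.1)
  have hn1 : 1 ≤ n := Nat.one_le_iff_ne_zero.2 fun h0 => by simp [h0, hH0] at hgH
  calc (a n • g) x = a n * g x := rfl
    _ ≤ a n * |g x| := mul_le_mul_of_nonneg_left (le_abs_self _) (hapos n hn1).le
    _ ≤ w g * |g x| := mul_le_mul_of_nonneg_right (hw n g hgH) (abs_nonneg _)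
    _ ≤ _ := le_weightedSup (hbdd x) (mem_iUnion.2 ⟨n, hgH⟩)

theorem exists_mem_apply_eq_one (hH0 : H 0 = ∅) (hanti : AntitoneOn a (Ici 1))
    (hapos : ∀ n, 1 ≤ n → 0 < a n) (hw : ∀ n, ∀ h ∈ H n ∪ -H n, a n ≤ w h)
    (hbdd : ∀ x, BddAbove ((fun h => w h * |h x|) '' ⋃ n, (H n ∪ -H n)))
    {x : X} (hx : weightedSup w (⋃ n, (H n ∪ -H n)) x = 1) {k : ℕ} (hk : 1 ≤ k)
    {h : StrongDual ℝ X} (hh : h ∈ H k) (hhx : a k * h x = 1) :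
    ∃ f ∈ ⋃ n, a n • ((H n \ H (n - 1)) ∪ -(H n \ H (n - 1))), f x = 1 := by
  obtain ⟨hj1, hjk, hj⟩ := sInf_setOf_mem_spec hH0 hh
  set j := sInf {n | h ∈ H n}
  refine ⟨a j • h, mem_iUnion.2 ⟨j, smul_mem_smul_set (Or.inl hj)⟩, le_antisymm ?_ ?_⟩
  · calc (a j • h) x = a j * h x := rfl
      _ ≤ a j * |h x| := mul_le_mul_of_nonneg_left (le_abs_self _) (hapos j hj1).le
      _ ≤ w h * |h x| := mul_le_mul_of_nonneg_right (hw j h (Or.inl hj.1)) (abs_nonneg _)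
      _ ≤ 1 := hx ▸ le_weightedSup (hbdd x) (mem_iUnion.2 ⟨j, Or.inl hj.1⟩)
  · have hpos : 0 < h x := pos_of_mul_pos_right (hhx ▸ one_pos) (hapos k hk).le
    calc 1 = a k * h x := hhx.symm
      _ ≤ a j * h x := mul_le_mul_of_nonneg_right (hanti hj1 hk hjk) hpos.le

theorem isBoundaryFor_weightedSup (hrel : ∀ n, IsRelativeBoundary (H n)) (hH0 : H 0 = ∅)
    (hball : ∀ n, H n ⊆ {f | ‖f‖ ≤ 1}) (hanti : AntitoneOn a (Ici 1))
    (hapos : ∀ n, 1 ≤ n → 0 < a n) (halim : Tendsto a atTop (𝓝 1))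
    (hw : ∀ n, ∀ h ∈ H n ∪ -H n, a n ≤ w h)
    (hw' : ∀ h ∈ ⋃ n, (H n ∪ -H n), ∃ k, 1 ≤ k ∧ h ∈ H k ∪ -H k ∧ w h = a k)
    (hbdd : ∀ x, BddAbove ((fun h => w h * |h x|) '' ⋃ n, (H n ∪ -H n)))
    (hlow : ∀ x : X, x ≠ 0 → ‖x‖ < weightedSup w (⋃ n, (H n ∪ -H n)) x) :
    IsBoundaryFor (weightedSup w (⋃ n, (H n ∪ -H n)))
      (⋃ n, a n • ((H n \ H (n - 1)) ∪ -(H n \ H (n - 1)))) := by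
  refine ⟨fun f hf x => apply_le_weightedSup_of_mem hH0 hapos hw hbdd hf x, fun x hx => ?_⟩
  have hx0 : x ≠ 0 := by
    rintro rfl
    simp [weightedSup_zero] at hx
  obtain ⟨k, hk, hxk⟩ :=
    exists_weightedSup_eq_weightedSup_const hball hapos halim hw hw' hbdd (hlow x hx0)
  have hfun : (fun h : StrongDual ℝ X => |h (a k • x)|) = fun h => a k * |h x| := by
    funext h
    simp [abs_mul, abs_of_pos (hapos k hk)]
  have hsup : sSup ((fun h : StrongDual ℝ X => |h (a k • x)|) '' H k) = 1 := by
    rw [hfun, ← hx, hxk]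
    rfl
  have hbdd' : BddAbove ((fun h : StrongDual ℝ X => |h (a k • x)|) '' H k) :=
    hfun ▸ bddAbove_weighted (fun g hg => ⟨hball k hg, (hapos k hk).le, le_rfl⟩) x
  rcases Real.sSup_image_abs_eq_or (fun h : StrongDual ℝ X => h (a k • x)) hbdd' with h1 | h1
  · obtain ⟨h, hh, hhx⟩ := hrel k (a k • x) (h1 ▸ hsup)
    exact exists_mem_apply_eq_one hH0 hanti hapos hw hbdd hx hk hh (by simpa using hhx)
  · have hneg : (fun h : StrongDual ℝ X => h (a k • -x)) = fun h => -h (a k • x) := by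
      funext h
      simp
    obtain ⟨h, hh, hhx⟩ := hrel k (a k • -x) (hneg ▸ h1 ▸ hsup)
    obtain ⟨f, hf, hfx⟩ := exists_mem_apply_eq_one hH0 hanti hapos hw hbdd
      ((weightedSup_neg w _ x).trans hx) hk hh (by simpa using hhx)
    exact ⟨-f, neg_mem_iUnion_smul_union_neg hf, by simpa using hfx⟩

end Renorming

theorem stmt3 {X : Type*} [NormedAddCommGroup X] [NormedSpace ℝ X]
    (S : ℕ → Set X) (H : ℕ → Set (StrongDual ℝ X)) (b c a : ℕ → ℝ)
    (nh : StrongDual ℝ X → ℕ) (sn : ℕ → X → ℝ) (tn : X → ℝ)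
    (hcover : Metric.sphere (0 : X) 1 = ⋃ (n : ℕ) (_ : 1 ≤ n), S n)
    (hH0 : H 0 = ∅)
    (hball : ∀ n, H n ⊆ {f : StrongDual ℝ X | ‖f‖ ≤ 1})
    (hb : ∀ n, 1 ≤ n →
      b n = sInf ((fun x : X => sSup ((fun h : StrongDual ℝ X => h x) '' H n)) '' S n))
    (hbpos : ∀ n, 1 ≤ n → 0 < b n)
    (hblim : Tendsto b atTop (𝓝 1))
    (hc : ∀ n, 1 ≤ n → c n = sInf (b '' Set.Ici n))
    (ha : ∀ n, 1 ≤ n → a n = (1 + (2 : ℝ) ^ (-(n : ℤ))) / c n)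
    (hnh : ∀ h ∈ ⋃ n, (H n ∪ -H n : Set (StrongDual ℝ X)),
      nh h = sInf {n : ℕ | h ∈ (H n ∪ -H n : Set (StrongDual ℝ X))})
    (hsn : ∀ (n : ℕ) (x : X),
      sn n x = sSup ((fun h : StrongDual ℝ X => a (nh h) * |h x|) '' H n))
    (htn : ∀ x : X,
      tn x = sSup ((fun h : StrongDual ℝ X => a (nh h) * |h x|) ''
        ⋃ n, (H n ∪ -H n : Set (StrongDual ℝ X)))) :
    (∀ x : X, x ≠ 0 → ‖x‖ < tn x ∧ tn x ≤ a 1 * ‖x‖) ∧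
    (∀ x : X, ∃ n : ℕ, 1 ≤ n ∧ tn x = sn n x) ∧
    ((∀ n, IsRelativeBoundary (H n)) →
      IsBoundaryFor tn
        (⋃ n, a n • ((H n \ H (n - 1)) ∪ -(H n \ H (n - 1))) : Set (StrongDual ℝ X))) := by
  obtain rfl : tn = weightedSup (fun h => a (nh h)) (⋃ n, (H n ∪ -H n)) := funext htn
  obtain rfl : sn = fun n => weightedSup (fun h => a (nh h)) (H n) := funext₂ hsn
  have hapos n (hn : 1 ≤ n) : 0 < a n := weight_pos hbpos hblim hc ha hn
  have hanti := antitoneOn_weight hbpos hblim hc ha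
  have hnh' n h (hh : h ∈ H n ∪ -H n) := sInf_index_spec hH0 hnh hh
  have hw n : ∀ h ∈ H n ∪ -H n, a n ≤ a (nh h) := fun h hh =>
    hanti (hnh' n h hh).1 ((hnh' n h hh).1.trans (hnh' n h hh).2.1) (hnh' n h hh).2.1
  have hw' : ∀ h ∈ ⋃ n, (H n ∪ -H n), ∃ k, 1 ≤ k ∧ h ∈ H k ∪ -H k ∧ a (nh h) = a k := by
    intro h hh
    obtain ⟨n, hn⟩ := mem_iUnion.1 hh
    exact ⟨nh h, (hnh' n h hn).1, (hnh' n h hn).2.2, rfl⟩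
  have hG := norm_le_one_and_weight_bounds hball hapos hanti hw'
  have hbdd := bddAbove_weighted hG
  have hlow x (hx : x ≠ 0) := norm_lt_weightedSup hcover.le hb hbpos
    (fun n hn => one_lt_weight_mul hbpos hblim hc ha hn) hw hbdd hx
  have halim := tendsto_weight hblim hc ha
  exact ⟨fun x hx => ⟨hlow x hx, weightedSup_le_mul_norm hG (hapos 1 le_rfl).le x⟩,
    exists_weightedSup_eq_weightedSup hball hapos halim hw hw' hbdd hlow,
    fun hrel => isBoundaryFor_weightedSup hrel hH0 hball hanti hapos halim hw hw' hbdd hlow⟩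

end
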